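/- Let P be a k-by-n binary matrix and s ∈ F_2^n, and let P_s be the submatrix of rows p with p·sᵀ = 1. Define the random variable Y on F_2^n by choosing d, e ∈ F_2^n independently uniformly and outputting Σ_{p: p·dᵀ=1 and p·eᵀ=1} p. Then P(Y·sᵀ = 0) = P(c₁ᵀ·c₂ = 0 | c₁, c₂ ~ C_s), where C_s is the column span of P_s and c₁, c₂ are independent uniform codewords. -/

import Mathlib

/-!
Over `F₂`, `[x = 1] = x`, so both sides of `(∑_{p·d = p·e = 1} p)·s = (P_s d)·(P_s e)` equal
`∑_p (p·d)(p·e)(p·s)`; hence `Y·s = 0` exactly when the codewords `P_s d` and `P_s e` are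
orthogonal. Since `d ↦ P_s d` is additive, all its nonempty fibres have the size of its kernel,
so it pushes the uniform distribution on `F₂ⁿ` forward to the uniform distribution on `C_s`.
-/

open Finset

/-- The code `C_s`: the column span of the submatrix `P_s` of `P` consisting of the rows
not orthogonal to `s`, realized as the image of `d ↦ P_s ⬝ dᵀ`. -/
def Cs {k n : ℕ} (P : Matrix (Fin k) (Fin n) (ZMod 2)) (s : Fin n → ZMod 2) :
    Finset ({i : Fin k // dotProduct (P i) s = 1} → ZMod 2) :=
  Finset.image (fun d : Fin n → ZMod 2 => fun i => dotProduct (P i.1) d) Finset.univ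

namespace AddMonoidHom

variable {G H : Type*} [AddGroup G] [Fintype G] [AddMonoid H] [DecidableEq H]

lemma card_filter_map_mem (f : G →+ H) {t : Finset H} (ht : t ⊆ univ.image f) :
    #{x | f x ∈ t} = #t * #{x | f x = 0} := by
  rw [← sum_card_fiberwise_eq_card_filter]
  exact sum_const_nat fun y hy =>
    card_fiber_eq_of_mem_range f (by simpa using ht hy) ⟨0, map_zero f⟩

lemma card_filter_comp_mul_card_image (f : G →+ H) (p : H → Prop) [DecidablePred p] :
    #{x | p (f x)} * #(univ.image f) = #{y ∈ univ.image f | p y} * Fintype.card G := by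
  have himage := card_filter_map_mem f (subset_refl (univ.image f))
  have hp := card_filter_map_mem f (filter_subset p (univ.image f))
  rw [filter_true_of_mem fun x _ => mem_image_of_mem f (mem_univ x), card_univ] at himage
  simp only [mem_filter, mem_image_of_mem f (mem_univ _), true_and] at hp
  rw [hp, himage]
  ring

lemma card_filter_comp_div_card_eq (f : G →+ H) (p : H → Prop) [DecidablePred p] :
    (#{x | p (f x)} : ℝ) / Fintype.card G = #{y ∈ univ.image f | p y} / #(univ.image f) := by
  rw [div_eq_div_iff (by simp [Fintype.card_ne_zero]) (by simp [univ_nonempty.ne_empty])]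
  exact_mod_cast card_filter_comp_mul_card_image f p

end AddMonoidHom

lemma ZMod.ite_eq_one_eq_mul (x a : ZMod 2) : (if x = 1 then a else 0) = x * a := by
  revert x a; decide

section RowFamily

variable {ι m R : Type*} [Fintype ι] [Fintype m]

lemma subtype_dotProduct_eq_sum_filter [CommSemiring R] (P : ι → m → R) (q : ι → Prop)
    [DecidablePred q] (d e : m → R) :
    (fun i : {i // q i} => P i ⬝ᵥ d) ⬝ᵥ (fun i : {i // q i} => P i ⬝ᵥ e) =
      ∑ i ∈ {i | q i}, (P i ⬝ᵥ d) * (P i ⬝ᵥ e) :=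
  (sum_subtype _ (fun _ => by simp) fun i => (P i ⬝ᵥ d) * (P i ⬝ᵥ e)).symm

variable (P : ι → m → ZMod 2) (s d e : m → ZMod 2)

lemma sum_filter_eq_one_dotProduct_eq_sum_mul [DecidableEq ι] :
    (∑ i ∈ {i | P i ⬝ᵥ d = 1 ∧ P i ⬝ᵥ e = 1}, P i) ⬝ᵥ s =
      ∑ i, (P i ⬝ᵥ s) * ((P i ⬝ᵥ d) * (P i ⬝ᵥ e)) := by
  rw [sum_dotProduct, sum_filter]
  refine sum_congr rfl fun i _ => ?_
  simp only [ite_and, ZMod.ite_eq_one_eq_mul]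
  ring

lemma sum_filter_eq_one_dotProduct_eq_dotProduct_subtype [DecidableEq ι] :
    (∑ i ∈ {i | P i ⬝ᵥ d = 1 ∧ P i ⬝ᵥ e = 1}, P i) ⬝ᵥ s =
      (fun i : {i // P i ⬝ᵥ s = 1} => P i ⬝ᵥ d) ⬝ᵥ (fun i : {i // P i ⬝ᵥ s = 1} => P i ⬝ᵥ e) := by
  rw [subtype_dotProduct_eq_sum_filter, sum_filter_eq_one_dotProduct_eq_sum_mul, sum_filter]
  simp only [ZMod.ite_eq_one_eq_mul]

end RowFamily

theorem classical_bias_eq_code_orthogonality {k n : ℕ}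
    (P : Matrix (Fin k) (Fin n) (ZMod 2)) (s : Fin n → ZMod 2) :
    ((Finset.univ.filter (fun de : (Fin n → ZMod 2) × (Fin n → ZMod 2) =>
        dotProduct
          (∑ i ∈ Finset.univ.filter (fun i : Fin k =>
              dotProduct (P i) de.1 = 1 ∧ dotProduct (P i) de.2 = 1), P i)
          s = 0)).card : ℝ) / ((2 : ℝ) ^ n) ^ 2 =
      ((((Cs P s) ×ˢ (Cs P s)).filter
          (fun cc => dotProduct cc.1 cc.2 = 0)).card : ℝ) /
        (((Cs P s).card : ℝ)) ^ 2 := by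
  set f := (P.submatrix (Subtype.val : {i // P i ⬝ᵥ s = 1} → Fin k) id).mulVecLin.toAddMonoidHom
  have hCs : Cs P s = univ.image f := rfl
  have himage : Cs P s ×ˢ Cs P s = univ.image (f.prodMap f) := by
    rw [hCs, ← prodMap_image_product, univ_product_univ, AddMonoidHom.coe_prodMap]
  have hcard : ((2 : ℝ) ^ n) ^ 2 = Fintype.card ((Fin n → ZMod 2) × (Fin n → ZMod 2)) := by
    simp [sq]
  have hden : ((#(Cs P s) : ℝ)) ^ 2 = #(Cs P s ×ˢ Cs P s) := by
    rw [card_product]; push_cast; ring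
  rw [hcard, hden, himage, ← (f.prodMap f).card_filter_comp_div_card_eq]
  congr 3
  exact filter_congr fun de _ =>
    (congrArg (· = 0) (sum_filter_eq_one_dotProduct_eq_dotProduct_subtype P s de.1 de.2)).to_iff
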